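/- arXiv:2204.00742 — 4 statements merged into one kernel-verified Lean document; each statement's English description precedes it below -/
import Mathlib

section
/- Let φ₁, φ₂ : G → ℝ≥0 be measurable on a unimodular locally compact group G, and suppose φ₁* * φ₂*(x) < ∞ for almost every x ∈ ℝ. Then φ₁* * φ₂* is finite and continuous at every point of ℝ \ {0}; moreover, if φ₁* * φ₂*(0) is finite, then φ₁* * φ₂* is also continuous at 0. -/
/-!
Both rearrangements are nonincreasing in `|x|` on `ℝ \ {0}` (or vanish identically). Writing
`a * b` as the area of `(0, a) × (0, b)`, the convolution becomes an integral over levels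
`(s, t)` of the overlap `|A_s ∩ (x - B_t)|` of the superlevel sets. Each superlevel set is, up to
a null set, a centred interval or all of `ℝ`, so each overlap is an explicit continuous function
of `x`, nonincreasing in `|x|`. Hence the convolution is nonincreasing in `|x|`, so finite off `0`
once finite a.e., and dominated convergence (dominated by the overlaps at a point closer to `0`
where the convolution is finite) gives continuity.
-/

open MeasureTheory Set
open scoped ENNReal

/-- The rearrangement of a measurable function `φ : G → ℝ` (assumed nonnegative). -/
noncomputable def rearrange {G : Type*} [MeasurableSpace G] (μ : Measure G)
    (φ : G → ℝ) (x : ℝ) : ℝ :=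
  sInf {t : ℝ | 0 ≤ t ∧ μ {g | t < φ g} ≤ ENNReal.ofReal (2 * |x|)}

/-- Convolution on ℝ (Lebesgue measure), valued in `[0, ∞]`. -/
noncomputable def convR' (f g : ℝ → ℝ) (x : ℝ) : ℝ≥0∞ :=
  ∫⁻ y, ENNReal.ofReal (f y) * ENNReal.ofReal (g (x - y))

open Filter
open scoped Topology

/-- For a set `U`, `RadiallyAntitone (· ∈ U)` (`≤` on `Prop` is implication) says that `U`
contains every nonzero point at most as far from `0` as some point of `U`. -/
def RadiallyAntitone {α : Type*} [LE α] (f : ℝ → α) : Prop :=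
  ∀ ⦃x y : ℝ⦄, x ≠ 0 → |x| ≤ |y| → f y ≤ f x

namespace RadiallyAntitone

variable {U : Set ℝ}

lemma ordConnected_insert_zero (hU : RadiallyAntitone (· ∈ U)) : (insert 0 U).OrdConnected := by
  refine ⟨fun a ha b hb c hc => ?_⟩
  rcases lt_trichotomy c 0 with hc0 | rfl | hc0
  · have ha0 : a < 0 := hc.1.trans_lt hc0
    have haU : a ∈ U := ha.resolve_left ha0.ne
    exact Or.inr (hU hc0.ne (by rw [abs_of_neg hc0, abs_of_neg ha0]; linarith [hc.1]) haU)
  · exact mem_insert 0 U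
  · have hb0 : 0 < b := hc0.trans_le hc.2
    have hbU : b ∈ U := hb.resolve_left hb0.ne'
    exact Or.inr (hU hc0.ne' (by rw [abs_of_pos hc0, abs_of_pos hb0]; exact hc.2) hbU)

lemma measurableSet (hU : RadiallyAntitone (· ∈ U)) : MeasurableSet U :=
  measurableSet_insert.1 hU.ordConnected_insert_zero.measurableSet

lemma setOf_lt {f : ℝ → ℝ} (hf : RadiallyAntitone f) (s : ℝ) :
    RadiallyAntitone (· ∈ {y | s < f y}) :=
  fun _ _ hx hxy hy => hy.trans_le (hf hx hxy)

lemma measurable {f : ℝ → ℝ} (hf : RadiallyAntitone f) : Measurable f :=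
  measurable_of_Ioi fun s => (hf.setOf_lt s).measurableSet

lemma ofReal_two_mul_abs_le_volume (hU : RadiallyAntitone (· ∈ U)) {y : ℝ} (hy : y ∈ U) :
    ENNReal.ofReal (2 * |y|) ≤ volume U := by
  have hsub : Ioo (-|y|) |y| \ {0} ⊆ U := fun z hz =>
    hU hz.2 (abs_lt.2 hz.1).le hy
  calc ENNReal.ofReal (2 * |y|) = volume (Ioo (-|y|) |y| \ {0}) := by
        rw [measure_sdiff_null Real.volume_singleton, Real.volume_Ioo]; ring_nf
    _ ≤ volume U := measure_mono hsub

lemma mem_of_ofReal_two_mul_abs_lt (hU : RadiallyAntitone (· ∈ U)) {z : ℝ} (hz : z ≠ 0)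
    (h : ENNReal.ofReal (2 * |z|) < volume U) : z ∈ U := by
  by_contra hzU
  have hsub : U \ {0} ⊆ Icc (-|z|) |z| := fun y hy =>
    abs_le.1 (not_lt.1 fun hzy => hzU (hU hz hzy.le hy.1))
  refine h.not_ge ?_
  calc volume U = volume (U \ {0}) := (measure_sdiff_null Real.volume_singleton).symm
    _ ≤ volume (Icc (-|z|) |z|) := measure_mono hsub
    _ = ENNReal.ofReal (2 * |z|) := by rw [Real.volume_Icc]; ring_nf

lemma ae_mem_iff (hU : RadiallyAntitone (· ∈ U)) :
    ∀ᵐ z : ℝ, z ∈ U ↔ ENNReal.ofReal (2 * |z|) < volume U := by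
  set r := (volume U).toReal / 2 with hr
  have hnull : ∀ᵐ z : ℝ, z ∉ ({0, r, -r} : Set ℝ) :=
    measure_eq_zero_iff_ae_notMem.1 ((Set.toFinite _).measure_zero _)
  filter_upwards [hnull] with z hz
  simp only [mem_insert_iff, mem_singleton_iff, not_or] at hz
  refine ⟨fun hzU => (hU.ofReal_two_mul_abs_le_volume hzU).lt_of_ne fun heq => ?_,
    hU.mem_of_ofReal_two_mul_abs_lt hz.1⟩
  have : |z| = r := by
    rw [hr, ← heq, ENNReal.toReal_ofReal (by positivity)]; ring
  rcases abs_choice z with h | h <;> rw [h] at this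
  · exact hz.2.1 this
  · exact hz.2.2 (by linarith)

lemma ae_eq_univ_or_Ioo (hU : RadiallyAntitone (· ∈ U)) :
    U =ᵐ[volume] (univ : Set ℝ) ∨ ∃ r : ℝ, U =ᵐ[volume] Ioo (-r) r := by
  by_cases htop : volume U = ∞
  · refine Or.inl (eventuallyEq_set.2 ?_)
    filter_upwards [hU.ae_mem_iff] with z hz
    rw [hz, htop]
    exact iff_of_true ENNReal.ofReal_lt_top trivial
  · right
    refine ⟨(volume U).toReal / 2, eventuallyEq_set.2 ?_⟩
    filter_upwards [hU.ae_mem_iff] with z hz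
    rw [hz, mem_Ioo, ← abs_lt, ENNReal.ofReal_lt_iff_lt_toReal (by positivity) htop]
    constructor <;> intro <;> linarith

end RadiallyAntitone

noncomputable def overlap (A B : Set ℝ) (x : ℝ) : ℝ≥0∞ :=
  volume (A ∩ (x - ·) ⁻¹' B)

section Overlap

variable {A A' B B' : Set ℝ}

lemma overlap_congr (hA : A =ᵐ[volume] A') (hB : B =ᵐ[volume] B') :
    overlap A B = overlap A' B' :=
  funext fun x => measure_congr <|
    hA.inter ((volume.measurePreserving_sub_left x).quasiMeasurePreserving.preimage_ae_eq hB)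

lemma overlap_univ_left (hB : MeasurableSet B) : overlap univ B = fun _ => volume B :=
  funext fun x => by
    rw [overlap, univ_inter, (volume.measurePreserving_sub_left x).measure_preimage
      hB.nullMeasurableSet]

lemma overlap_univ_right (A : Set ℝ) : overlap A univ = fun _ => volume A :=
  funext fun x => by rw [overlap, preimage_univ, inter_univ]

lemma overlap_Ioo_Ioo (a b x : ℝ) :
    overlap (Ioo (-a) a) (Ioo (-b) b) x =
      ENNReal.ofReal (min (2 * a) (min (2 * b) (a + b - |x|))) := by
  rw [overlap, preimage_const_sub_Ioo, Ioo_inter_Ioo, Real.volume_Ioo]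
  congr 1
  rcases abs_cases x with ⟨hx, _⟩ | ⟨hx, _⟩ <;> rw [hx] <;>
    simp only [min_def, max_def] <;> split_ifs <;> linarith

lemma RadiallyAntitone.overlap_eq (hA : RadiallyAntitone (· ∈ A))
    (hB : RadiallyAntitone (· ∈ B)) :
    (∃ c, overlap A B = fun _ => c) ∨
      ∃ a b : ℝ,
        overlap A B = fun x => ENNReal.ofReal (min (2 * a) (min (2 * b) (a + b - |x|))) := by
  rcases hA.ae_eq_univ_or_Ioo with hA' | ⟨a, hA'⟩
  · rw [overlap_congr hA' (EventuallyEq.refl _ B)]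
    exact Or.inl ⟨_, overlap_univ_left hB.measurableSet⟩
  rcases hB.ae_eq_univ_or_Ioo with hB' | ⟨b, hB'⟩
  · rw [overlap_congr hA' hB']
    exact Or.inl ⟨_, overlap_univ_right _⟩
  · rw [overlap_congr hA' hB']
    exact Or.inr ⟨a, b, funext (overlap_Ioo_Ioo a b)⟩

lemma RadiallyAntitone.continuous_overlap (hA : RadiallyAntitone (· ∈ A))
    (hB : RadiallyAntitone (· ∈ B)) : Continuous (overlap A B) := by
  rcases hA.overlap_eq hB with ⟨c, hc⟩ | ⟨a, b, hab⟩
  · exact hc ▸ continuous_const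
  · rw [hab]
    exact ENNReal.continuous_ofReal.comp (by fun_prop)

lemma RadiallyAntitone.overlap_le_overlap (hA : RadiallyAntitone (· ∈ A))
    (hB : RadiallyAntitone (· ∈ B)) {x y : ℝ} (hxy : |x| ≤ |y|) :
    overlap A B y ≤ overlap A B x := by
  rcases hA.overlap_eq hB with ⟨c, hc⟩ | ⟨a, b, hab⟩
  · simp [hc]
  · rw [hab]
    exact ENNReal.ofReal_le_ofReal (min_le_min le_rfl (min_le_min le_rfl (by linarith)))

end Overlap

section LayerCake

variable {α : Type*} [MeasurableSpace α] (ν : Measure α) [SFinite ν] {F G : α → ℝ}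

lemma measurableSet_setOf_lt_and_lt (hF : Measurable F) (hG : Measurable G) :
    MeasurableSet {q : α × (ℝ × ℝ) | q.2.1 < F q.1 ∧ q.2.2 < G q.1} :=
  (measurableSet_lt measurable_snd.fst (hF.comp measurable_fst)).inter
    (measurableSet_lt measurable_snd.snd (hG.comp measurable_fst))

lemma measurable_measure_setOf_lt_and_lt (hF : Measurable F) (hG : Measurable G) :
    Measurable fun p : ℝ × ℝ => ν {y | p.1 < F y ∧ p.2 < G y} :=
  measurable_measure_prodMk_right (measurableSet_setOf_lt_and_lt hF hG)

/-- Layer cake in both factors: `a * b` is the area of `(0, a) × (0, b)`, then Tonelli. -/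
lemma lintegral_ofReal_mul_ofReal (hF : Measurable F) (hG : Measurable G) :
    ∫⁻ y, ENNReal.ofReal (F y) * ENNReal.ofReal (G y) ∂ν =
      ∫⁻ p in Ioi 0 ×ˢ Ioi 0, ν {y | p.1 < F y ∧ p.2 < G y} := by
  set S := {q : α × (ℝ × ℝ) | q.2.1 < F q.1 ∧ q.2.2 < G q.1} with hS_def
  have hS : MeasurableSet S := measurableSet_setOf_lt_and_lt hF hG
  have hslice : ∀ y, Prod.mk y ⁻¹' S ∩ Ioi 0 ×ˢ Ioi 0 = Ioo 0 (F y) ×ˢ Ioo 0 (G y) := by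
    intro y; ext p
    simp only [hS_def, mem_inter_iff, mem_preimage, mem_ofPred_eq, mem_prod, mem_Ioi, mem_Ioo]
    tauto
  calc ∫⁻ y, ENNReal.ofReal (F y) * ENNReal.ofReal (G y) ∂ν
      = ∫⁻ y, volume.restrict (Ioi 0 ×ˢ Ioi 0) (Prod.mk y ⁻¹' S) ∂ν := by
        refine lintegral_congr fun y => ?_
        rw [Measure.restrict_apply' (measurableSet_Ioi.prod measurableSet_Ioi), hslice,
          Measure.volume_eq_prod, Measure.prod_prod, Real.volume_Ioo, Real.volume_Ioo,
          sub_zero, sub_zero]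
    _ = ∫⁻ p in Ioi 0 ×ˢ Ioi 0, ν {y | p.1 < F y ∧ p.2 < G y} := by
        rw [← Measure.prod_apply hS, Measure.prod_apply_symm hS]
        rfl

end LayerCake

lemma convR'_eq_lintegral_overlap {f g : ℝ → ℝ} (hf : Measurable f) (hg : Measurable g)
    (x : ℝ) :
    convR' f g x = ∫⁻ p in Ioi 0 ×ˢ Ioi 0, overlap {y | p.1 < f y} {z | p.2 < g z} x :=
  lintegral_ofReal_mul_ofReal volume hf (hg.comp (measurable_const.sub measurable_id))

namespace RadiallyAntitone

variable {f g : ℝ → ℝ}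

lemma convR'_le_convR' (hf : RadiallyAntitone f) (hg : RadiallyAntitone g) {x y : ℝ}
    (hxy : |x| ≤ |y|) : convR' f g y ≤ convR' f g x := by
  simp only [convR'_eq_lintegral_overlap hf.measurable hg.measurable]
  exact lintegral_mono fun p => (hf.setOf_lt p.1).overlap_le_overlap (hg.setOf_lt p.2) hxy

lemma convR'_lt_top_of_ae_lt_top (hf : RadiallyAntitone f) (hg : RadiallyAntitone g)
    (hfin : ∀ᵐ x, convR' f g x < ⊤) {x : ℝ} (hx : x ≠ 0) : convR' f g x < ⊤ := by
  have hpos : volume (Ioo 0 |x|) ≠ 0 := by simpa using hx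
  obtain ⟨x', hx', hx'fin⟩ :=
    Measure.exists_mem_of_measure_ne_zero_of_ae hpos (ae_restrict_of_ae hfin)
  refine (convR'_le_convR' hf hg ?_).trans_lt hx'fin
  rw [abs_of_pos hx'.1]
  exact hx'.2.le

lemma continuousAt_convR' (hf : RadiallyAntitone f) (hg : RadiallyAntitone g) {x₀ xs : ℝ}
    (hxs : convR' f g xs < ⊤) (hnear : ∀ᶠ x in 𝓝 x₀, |xs| ≤ |x|) :
    ContinuousAt (convR' f g) x₀ := by
  have hrep := funext (convR'_eq_lintegral_overlap hf.measurable hg.measurable)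
  rw [ContinuousAt, hrep]
  refine tendsto_lintegral_filter_of_dominated_convergence _
    (Eventually.of_forall fun x => measurable_measure_setOf_lt_and_lt volume hf.measurable
      (hg.measurable.comp (measurable_const.sub measurable_id)))
    ?_ (congrFun hrep xs ▸ hxs.ne) (ae_of_all _ fun p =>
      ((hf.setOf_lt p.1).continuous_overlap (hg.setOf_lt p.2)).continuousAt)
  filter_upwards [hnear] with x hx
  exact ae_of_all _ fun p => (hf.setOf_lt p.1).overlap_le_overlap (hg.setOf_lt p.2) hx

theorem convR'_lt_top_and_continuousAt (hf : RadiallyAntitone f) (hg : RadiallyAntitone g)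
    (hfin : ∀ᵐ x, convR' f g x < ⊤) :
    (∀ x : ℝ, x ≠ 0 → convR' f g x < ⊤) ∧
    (∀ x : ℝ, x ≠ 0 → ContinuousAt (convR' f g) x) ∧
    (convR' f g 0 < ⊤ → ContinuousAt (convR' f g) 0) := by
  have hfin' : ∀ x : ℝ, x ≠ 0 → convR' f g x < ⊤ := fun _ =>
    convR'_lt_top_of_ae_lt_top hf hg hfin
  refine ⟨hfin', fun x hx => ?_, fun h0 => continuousAt_convR' hf hg h0 (by simp)⟩
  have hhalf : |x / 2| < |x| := by
    rw [abs_div, abs_two]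
    linarith [abs_pos.2 hx]
  exact continuousAt_convR' hf hg (hfin' (x / 2) (by simpa using hx))
    (((continuous_abs.tendsto x).eventually_const_lt hhalf).mono fun _ => le_of_lt)

end RadiallyAntitone

section Rearrange

variable {G : Type*} [MeasurableSpace G] (μ : Measure G) {φ : G → ℝ}

lemma exists_nonneg_measure_setOf_lt_lt (hφ : Measurable φ) {t₀ : ℝ}
    (ht₀ : μ {g | t₀ < φ g} ≠ ∞) {ε : ℝ≥0∞} (hε : 0 < ε) :
    ∃ t, 0 ≤ t ∧ μ {g | t < φ g} < ε := by
  have hlim := tendsto_measure_iInter_atTop (μ := μ) (s := fun t : ℝ => {g | t < φ g})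
    (fun _ => (measurableSet_lt measurable_const hφ).nullMeasurableSet)
    (fun _ _ hst _ hg => hst.trans_lt hg) ⟨t₀, ht₀⟩
  rw [iInter_eq_empty_iff.2 fun g => ⟨φ g, (lt_irrefl (φ g) ·)⟩, measure_empty] at hlim
  obtain ⟨t, ht, ht0⟩ :=
    ((hlim.eventually (gt_mem_nhds hε)).and (eventually_ge_atTop 0)).exists
  exact ⟨t, ht0, ht⟩

lemma radiallyAntitone_rearrange (hφ : Measurable φ) : RadiallyAntitone (rearrange μ φ) := by
  intro x y hx hxy
  by_cases hfin : ∃ t₀, μ {g | t₀ < φ g} ≠ ∞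
  · obtain ⟨t₀, ht₀⟩ := hfin
    obtain ⟨t, ht0, ht⟩ := exists_nonneg_measure_setOf_lt_lt μ hφ ht₀
      (ENNReal.ofReal_pos.2 (by positivity : 0 < 2 * |x|))
    exact csInf_le_csInf ⟨0, fun _ hs => hs.1⟩ ⟨t, ht0, ht.le⟩ fun s hs =>
      ⟨hs.1, hs.2.trans (ENNReal.ofReal_le_ofReal (by linarith))⟩
  · -- no admissible level: `rearrange μ φ y = sInf ∅ = 0`
    push Not at hfin
    have hempty : {t : ℝ | 0 ≤ t ∧ μ {g | t < φ g} ≤ ENNReal.ofReal (2 * |y|)} = ∅ :=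
      eq_empty_iff_forall_notMem.2 fun t ht =>
        ENNReal.ofReal_ne_top (top_le_iff.1 (hfin t ▸ ht.2))
    rw [rearrange, hempty, Real.sInf_empty]
    exact Real.sInf_nonneg fun _ hs => hs.1

end Rearrange

theorem stmt6_general {G : Type*} [MeasurableSpace G]
    (μ : Measure G)
    (φ₁ φ₂ : G → ℝ) (h₁ : Measurable φ₁) (h₂ : Measurable φ₂)
    (hfin : ∀ᵐ x : ℝ, convR' (rearrange μ φ₁) (rearrange μ φ₂) x < ⊤) :
    (∀ x : ℝ, x ≠ 0 → convR' (rearrange μ φ₁) (rearrange μ φ₂) x < ⊤) ∧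
    (∀ x : ℝ, x ≠ 0 →
      ContinuousAt (convR' (rearrange μ φ₁) (rearrange μ φ₂)) x) ∧
    (convR' (rearrange μ φ₁) (rearrange μ φ₂) 0 < ⊤ →
      ContinuousAt (convR' (rearrange μ φ₁) (rearrange μ φ₂)) 0) :=
  (radiallyAntitone_rearrange μ h₁).convR'_lt_top_and_continuousAt
    (radiallyAntitone_rearrange μ h₂) hfin

/-- If `φ₁* * φ₂*` is finite a.e., then it is finite and continuous away from `0`;
if it is moreover finite at `0`, it is continuous at `0` as well. -/
theorem stmt6 {G : Type*} [Group G] [TopologicalSpace G] [IsTopologicalGroup G]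
    [LocallyCompactSpace G] [MeasurableSpace G] [BorelSpace G]
    (μ : Measure G) [μ.IsHaarMeasure] [μ.IsMulRightInvariant]
    (φ₁ φ₂ : G → ℝ) (h₁ : Measurable φ₁) (h₂ : Measurable φ₂)
    (h₁0 : ∀ g, 0 ≤ φ₁ g) (h₂0 : ∀ g, 0 ≤ φ₂ g)
    (hfin : ∀ᵐ x : ℝ, convR' (rearrange μ φ₁) (rearrange μ φ₂) x < ⊤) :
    (∀ x : ℝ, x ≠ 0 → convR' (rearrange μ φ₁) (rearrange μ φ₂) x < ⊤) ∧
    (∀ x : ℝ, x ≠ 0 →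
      ContinuousAt (convR' (rearrange μ φ₁) (rearrange μ φ₂)) x) ∧
    (convR' (rearrange μ φ₁) (rearrange μ φ₂) 0 < ⊤ →
      ContinuousAt (convR' (rearrange μ φ₁) (rearrange μ φ₂)) 0) :=
  stmt6_general μ φ₁ φ₂ h₁ h₂ hfin
end

section
/- Let f : ℝ≥0 → ℝ be a convex function with f(0) = 0 that is continuous at 0 and has finite right derivative f'₊(0) > −∞. Then there exists a Borel measure ν on (0,∞) with ν((t₁, t₂]) = f'₊(t₂) − f'₊(t₁) for all 0 ≤ t₁ ≤ t₂, and f(y) = f'₊(0)·y + ∫₀^∞ max(y − t, 0) dν(t) for all y ≥ 0. -/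
/-!
The right derivative `D` of a convex function is monotone (it is squeezed between secant slopes)
and right-continuous (secant slopes depend continuously on their left endpoint), so `D`, extended
by the constant `D 0` to the left of `0`, is a Stieltjes function; `ν` is its measure. By Tonelli,
`∫ (y - t)₊ dν(t) = ∫_{s ≤ y} ν (-∞, s] ds = ∫₀^y (D s - D 0) ds`, while `f y = ∫₀^y D` by
the fundamental theorem of calculus for right derivatives.
-/

open MeasureTheory Set Filter Topology

lemma hasDerivWithinAt_Ioi_of_tendsto_slope_zero_right {f : ℝ → ℝ} {f' x : ℝ}
    (h : Tendsto (fun t => (f (x + t) - f x) / t) (𝓝[>] 0) (𝓝 f')) :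
    HasDerivWithinAt f f' (Ioi x) x := by
  have : 𝓝[>] x = map (x + ·) (𝓝[>] 0) := by simp
  rw [hasDerivWithinAt_iff_tendsto_slope' self_notMem_Ioi, this, tendsto_map'_iff]
  simpa [Function.comp_def, slope_def_field] using h

lemma lintegral_ofReal_sub_eq_setLIntegral_measure_Iic (ν : Measure ℝ) [SFinite ν] (y : ℝ) :
    ∫⁻ t, ENNReal.ofReal (y - t) ∂ν = ∫⁻ s in Iic y, ν (Iic s) := by
  let g : ℝ → ℝ → ENNReal := fun t s => {p : ℝ × ℝ | p.1 ≤ p.2}.indicator 1 (t, s)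
  have hg : Measurable (Function.uncurry g) :=
    measurable_one.indicator (measurableSet_le measurable_fst measurable_snd)
  have hslice : ∀ t, ENNReal.ofReal (y - t) = ∫⁻ s in Iic y, g t s := by
    intro t
    rw [show g t = (Ici t).indicator 1 from rfl, lintegral_indicator_one measurableSet_Ici,
      Measure.restrict_apply measurableSet_Ici, Ici_inter_Iic, Real.volume_Icc]
  calc ∫⁻ t, ENNReal.ofReal (y - t) ∂ν
      = ∫⁻ t, (∫⁻ s in Iic y, g t s) ∂ν := lintegral_congr hslice
    _ = ∫⁻ s in Iic y, ∫⁻ t, g t s ∂ν := lintegral_lintegral_swap hg.aemeasurable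
    _ = ∫⁻ s in Iic y, ν (Iic s) := by
        congr! 2 with s
        exact lintegral_indicator_one (s := Iic s) measurableSet_Iic

lemma MonotoneOn.intervalIntegrable_of_Ici {D : ℝ → ℝ} {a y : ℝ} (hD : MonotoneOn D (Ici a))
    (hy : a ≤ y) : IntervalIntegrable D volume a y :=
  (hD.mono (uIcc_of_le hy ▸ Icc_subset_Ici_self)).intervalIntegrable

namespace ConvexOn

variable {f D : ℝ → ℝ} {a : ℝ}

lemma monotoneOn_of_hasDerivWithinAt_Ioi (hf : ConvexOn ℝ (Ici a) f)
    (hD : ∀ x ∈ Ici a, HasDerivWithinAt f (D x) (Ioi x) x) : MonotoneOn D (Ici a) := by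
  intro x hx z hz hxz
  rcases hxz.eq_or_lt with rfl | hxz
  · rfl
  refine (hf.le_slope_of_hasDerivWithinAt_Ioi hx hz hxz (hD x hx)).trans ?_
  refine ge_of_tendsto ((hasDerivWithinAt_iff_tendsto_slope' self_notMem_Ioi).1 (hD z hz)) ?_
  filter_upwards [self_mem_nhdsWithin] with w (hzw : z < w)
  rw [slope_comm]
  exact hf.slope_mono hz ⟨hx, hxz.ne⟩ ⟨hz.trans hzw.le, hzw.ne'⟩ (hxz.trans hzw).le

lemma continuousWithinAt_Ici_of_hasDerivWithinAt_Ioi (hf : ConvexOn ℝ (Ici a) f)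
    (hD : ∀ x ∈ Ici a, HasDerivWithinAt f (D x) (Ioi x) x) {x : ℝ} (hx : x ∈ Ici a) :
    ContinuousWithinAt D (Ici x) x := by
  refine tendsto_order.2 ⟨fun b hb => ?_, fun b hb => ?_⟩
  · filter_upwards [self_mem_nhdsWithin] with u (hxu : x ≤ u)
    exact hb.trans_le (hf.monotoneOn_of_hasDerivWithinAt_Ioi hD hx (hx.trans hxu) hxu)
  obtain ⟨z, hzb, hxz⟩ : ∃ z, slope f x z < b ∧ x < z :=
    ((((hasDerivWithinAt_iff_tendsto_slope' self_notMem_Ioi).1 (hD x hx)).eventually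
      (eventually_lt_nhds hb)).and self_mem_nhdsWithin).exists
  -- For `u ≥ x` near `x`, `D u ≤ slope f u z`, which is close to `slope f x z < b`.
  have hslope : ContinuousWithinAt (fun u => (f z - f u) / (z - u)) (Ici x) x :=
    (continuousWithinAt_const.sub
      (continuousWithinAt_Ioi_iff_Ici.1 (hD x hx).continuousWithinAt)).div
      (continuousWithinAt_const.sub continuousWithinAt_id) (sub_ne_zero.2 hxz.ne')
  rw [slope_def_field] at hzb
  filter_upwards [hslope.eventually (eventually_lt_nhds hzb), self_mem_nhdsWithin,
    nhdsWithin_le_nhds (eventually_lt_nhds hxz)] with u hub (hxu : x ≤ u) huz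
  have hu : u ∈ Ici a := hx.trans hxu
  calc D u ≤ slope f u z := hf.le_slope_of_hasDerivWithinAt_Ioi hu (hu.trans huz.le) huz (hD u hu)
    _ < b := by rwa [slope_def_field]

lemma integral_eq_sub_of_hasDerivWithinAt_Ioi (hf : ConvexOn ℝ (Ici a) f)
    (hD : ∀ x ∈ Ici a, HasDerivWithinAt f (D x) (Ioi x) x) {y : ℝ} (hy : a ≤ y) :
    ∫ t in a..y, D t = f y - f a :=
  intervalIntegral.integral_eq_sub_of_hasDeriv_right_of_le hy
    ((hf.continuousOn_Ici (continuousWithinAt_Ioi_iff_Ici.1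
      (hD a self_mem_Ici).continuousWithinAt)).mono Icc_subset_Ici_self)
    (fun x hx => hD x hx.1.le)
    ((hf.monotoneOn_of_hasDerivWithinAt_Ioi hD).intervalIntegrable_of_Ici hy)

end ConvexOn

namespace StieltjesFunction

variable {D : ℝ → ℝ} {a : ℝ}

noncomputable def ofMonotoneOnIci (hmono : MonotoneOn D (Ici a))
    (hcont : ∀ x ∈ Ici a, ContinuousWithinAt D (Ici x) x) : StieltjesFunction ℝ where
  toFun t := D (max t a)
  mono' s t hst := hmono (le_max_right s a) (le_max_right t a) (max_le_max_right a hst)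
  right_continuous' x := (hcont _ (le_max_right x a)).comp (f := fun t => max t a)
    (continuous_id.max continuous_const).continuousWithinAt fun _ ht => max_le_max_right a ht

variable {hmono : MonotoneOn D (Ici a)} {hcont : ∀ x ∈ Ici a, ContinuousWithinAt D (Ici x) x}

lemma ofMonotoneOnIci_apply {t : ℝ} (ht : a ≤ t) : ofMonotoneOnIci hmono hcont t = D t := by
  simp [ofMonotoneOnIci, max_eq_left ht]

lemma ofMonotoneOnIci_apply_of_le {t : ℝ} (ht : t ≤ a) :
    ofMonotoneOnIci hmono hcont t = D a := by
  simp [ofMonotoneOnIci, max_eq_right ht]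

lemma measure_ofMonotoneOnIci_Iic (t : ℝ) :
    (ofMonotoneOnIci hmono hcont).measure (Iic t) = ENNReal.ofReal (D (max t a) - D a) := by
  refine measure_Iic _ ?_ t
  refine tendsto_const_nhds.congr' ?_
  filter_upwards [eventually_le_atBot a] with u hu
  exact (ofMonotoneOnIci_apply_of_le hu).symm

lemma lintegral_ofReal_sub_ofMonotoneOnIci {y : ℝ} (hy : a ≤ y) :
    ∫⁻ t, ENNReal.ofReal (y - t) ∂(ofMonotoneOnIci hmono hcont).measure =
      ENNReal.ofReal (∫ s in a..y, (D s - D a)) := by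
  have hleft : ∀ s ∈ Iic a, (ofMonotoneOnIci hmono hcont).measure (Iic s) = 0 := fun s hs => by
    rw [measure_ofMonotoneOnIci_Iic, max_eq_right hs, sub_self, ENNReal.ofReal_zero]
  have hright : ∀ s ∈ Ioc a y,
      (ofMonotoneOnIci hmono hcont).measure (Iic s) = ENNReal.ofReal (D s - D a) := fun s hs => by
    rw [measure_ofMonotoneOnIci_Iic, max_eq_left hs.1.le]
  have hint : IntegrableOn (fun s => D s - D a) (Ioc a y) :=
    (intervalIntegrable_iff_integrableOn_Ioc_of_le hy).1
      ((hmono.intervalIntegrable_of_Ici hy).sub intervalIntegrable_const)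
  have hnonneg : 0 ≤ᵐ[volume.restrict (Ioc a y)] fun s => D s - D a := by
    filter_upwards [ae_restrict_mem measurableSet_Ioc] with s hs
    exact sub_nonneg.2 (hmono self_mem_Ici hs.1.le hs.1.le)
  rw [lintegral_ofReal_sub_eq_setLIntegral_measure_Iic, ← Iic_union_Ioc_eq_Iic hy,
    lintegral_union measurableSet_Ioc (Iic_disjoint_Ioc le_rfl),
    setLIntegral_congr_fun measurableSet_Iic hleft, lintegral_zero, zero_add,
    setLIntegral_congr_fun measurableSet_Ioc hright, intervalIntegral.integral_of_le hy,
    ofReal_integral_eq_lintegral_ofReal hint hnonneg]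

end StieltjesFunction

theorem stmt8_general (f : ℝ → ℝ) (hf : ConvexOn ℝ (Set.Ici 0) f) (hf0 : f 0 = 0)
    (D : ℝ → ℝ)
    (hD : ∀ t ≥ (0 : ℝ), Tendsto (fun h => (f (t + h) - f t) / h)
      (nhdsWithin 0 (Set.Ioi 0)) (nhds (D t))) :
    ∃ ν : Measure ℝ,
      (∀ t₁ t₂ : ℝ, 0 ≤ t₁ → t₁ ≤ t₂ →
        ν (Set.Ioc t₁ t₂) = ENNReal.ofReal (D t₂ - D t₁)) ∧
      ν (Set.Iic 0) = 0 ∧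
      ∀ y ≥ (0 : ℝ),
        f y = D 0 * y + (∫⁻ t, ENNReal.ofReal (max (y - t) 0) ∂ν).toReal := by
  have hD' : ∀ x ∈ Ici 0, HasDerivWithinAt f (D x) (Ioi x) x :=
    fun x hx => hasDerivWithinAt_Ioi_of_tendsto_slope_zero_right (hD x hx)
  have hmono := hf.monotoneOn_of_hasDerivWithinAt_Ioi hD'
  let F := StieltjesFunction.ofMonotoneOnIci hmono
    fun _ hx => hf.continuousWithinAt_Ici_of_hasDerivWithinAt_Ioi hD' hx
  refine ⟨F.measure, fun t₁ t₂ h₁ h₂ => ?_, ?_, fun y hy => ?_⟩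
  · rw [F.measure_Ioc, StieltjesFunction.ofMonotoneOnIci_apply h₁,
      StieltjesFunction.ofMonotoneOnIci_apply (h₁.trans h₂)]
  · rw [StieltjesFunction.measure_ofMonotoneOnIci_Iic, max_self, sub_self, ENNReal.ofReal_zero]
  have hnonneg : 0 ≤ ∫ s in (0 : ℝ)..y, (D s - D 0) :=
    intervalIntegral.integral_nonneg hy fun s hs => sub_nonneg.2 (hmono self_mem_Ici hs.1 hs.1)
  simp only [ENNReal.ofReal_max, ENNReal.ofReal_zero, zero_le, sup_of_le_left]
  rw [StieltjesFunction.lintegral_ofReal_sub_ofMonotoneOnIci hy, ENNReal.toReal_ofReal hnonneg,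
    intervalIntegral.integral_sub (hmono.intervalIntegrable_of_Ici hy) intervalIntegrable_const,
    hf.integral_eq_sub_of_hasDerivWithinAt_Ioi hD' hy]
  simp only [intervalIntegral.integral_const, smul_eq_mul, hf0]
  ring

/-- Decomposition of a convex function `f` on `[0, ∞)` with `f 0 = 0`, continuous
at `0` and with finite right derivative `D t` at every `t ≥ 0`: there is a Borel
measure `ν` on `(0, ∞)` with `ν ((t₁, t₂]) = D t₂ - D t₁` and
`f y = D 0 * y + ∫ max (y - t) 0 dν (t)`. -/
theorem stmt8 (f : ℝ → ℝ) (hf : ConvexOn ℝ (Set.Ici 0) f) (hf0 : f 0 = 0)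
    (hcont : ContinuousWithinAt f (Set.Ici 0) 0)
    (D : ℝ → ℝ)
    (hD : ∀ t ≥ (0 : ℝ), Tendsto (fun h => (f (t + h) - f t) / h)
      (nhdsWithin 0 (Set.Ioi 0)) (nhds (D t))) :
    ∃ ν : Measure ℝ,
      (∀ t₁ t₂ : ℝ, 0 ≤ t₁ → t₁ ≤ t₂ →
        ν (Set.Ioc t₁ t₂) = ENNReal.ofReal (D t₂ - D t₁)) ∧
      ν (Set.Iic 0) = 0 ∧
      ∀ y ≥ (0 : ℝ),
        f y = D 0 * y + (∫⁻ t, ENNReal.ofReal (max (y - t) 0) ∂ν).toReal :=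
  stmt8_general f hf hf0 D hD
end

section
/- Let f : ℝ≥0 → ℝ be convex with f(0) = 0, and suppose f is not monotonically decreasing and f(t) < 0 for some t > 0. Then there exists t' > t with f(t') = 0; moreover f(y) ≤ 0 for all 0 ≤ y ≤ t', and f(y) ≥ 0 for all y ≥ t'. -/
/-!
Convexity turns one increase `f u < f v` into a linear lower bound beyond `v`, so `f → ∞` and the
intermediate value theorem gives a zero `t'` of `f` beyond `t`. The sublevel set `{f ≤ 0}` is convex
and contains `0` and `t'`; and since `f t < f t'`, convexity makes `f` nondecreasing after `t'`.
-/

open Set Filter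

theorem ConvexOn.tendsto_atTop_of_lt {f : ℝ → ℝ} {a u v : ℝ} (hf : ConvexOn ℝ (Ici a) f)
    (hu : a ≤ u) (huv : u < v) (hfuv : f u < f v) : Tendsto f atTop atTop := by
  set m := (f v - f u) / (v - u)
  have hm : 0 < m := div_pos (by linarith) (by linarith)
  have linear_le : ∀ x, v < x → f v + m * (x - v) ≤ f x := fun x hvx => by
    have hslope := hf.slope_mono_adjacent (mem_Ici.2 hu) (mem_Ici.2 (by linarith)) huv hvx
    linarith [(le_div_iff₀ (sub_pos.2 hvx)).1 hslope]
  refine tendsto_atTop_mono' _ ((eventually_gt_atTop v).mono linear_le) ?_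
  exact tendsto_atTop_add_const_left _ _
    ((tendsto_id.atTop_add tendsto_const_nhds).const_mul_atTop hm)

/-- If `f` is convex on `[0,∞)`, `f 0 = 0`, `f` is not monotonically decreasing,
and `f t < 0` for some `t > 0`, then there is `t' > t` with `f t' = 0`, `f ≤ 0`
on `[0, t']`, and `f ≥ 0` on `[t', ∞)`. -/
theorem stmt9 (f : ℝ → ℝ) (hf : ConvexOn ℝ (Set.Ici 0) f) (hf0 : f 0 = 0)
    (hnotdec : ∃ u v : ℝ, 0 ≤ u ∧ u < v ∧ f u < f v)
    (t : ℝ) (ht : 0 < t) (hft : f t < 0) :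
    ∃ t' : ℝ, t < t' ∧ f t' = 0 ∧
      (∀ y, 0 ≤ y → y ≤ t' → f y ≤ 0) ∧
      (∀ y, t' ≤ y → 0 ≤ f y) := by
  obtain ⟨u, v, hu, huv, hfuv⟩ := hnotdec
  obtain ⟨B, hfB, htB⟩ :=
    (((hf.tendsto_atTop_of_lt hu huv hfuv).eventually_gt_atTop 0).and (eventually_gt_atTop t)).exists
  have hcont : ContinuousOn f (Icc t B) :=
    (interior_Ici (a := (0 : ℝ)) ▸ hf.continuousOn_interior).mono fun x hx => ht.trans_le hx.1
  obtain ⟨t', ⟨htt', -⟩, hft'⟩ := intermediate_value_Ioo htB.le hcont ⟨hft, hfB⟩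
  have ht' : (0 : ℝ) ≤ t' := (ht.trans htt').le
  refine ⟨t', htt', hft', fun y hy0 hyt' => ?_, fun y hy => ?_⟩
  · have hseg : y ∈ segment ℝ 0 t' := by rw [segment_eq_Icc ht']; exact ⟨hy0, hyt'⟩
    simpa [hf0, hft'] using hf.le_on_segment (mem_Ici.2 le_rfl) (mem_Ici.2 ht') hseg
  · simpa [hft'] using hf.le_right_of_left_le'' (mem_Ici.2 ht.le) (mem_Ici.2 (ht'.trans hy))
      htt' hy (by linarith)
end

section
/- Let f : ℝ≥0 → ℝ be convex with f(0) = 0, let t > 0 satisfy f(t) < 0, and let t' > t satisfy f(t') = 0 with f ≤ 0 on [0, t']. Then for every y ≥ 0 one has y ≤ t·max(−f(y), 0)/(−f(t)) + t'·max(y − t, 0)/(t' − t). -/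
open Set

/-! By convexity, `f` lies below its chords over `[0, t]` and `[t, t']`, i.e. below `f t` times
the tent function with peak `1` at `t` vanishing at `0` and `t'`. On `[0, t']` the first summand
therefore dominates `t` times that tent, and adding the second summand gives exactly `y`; beyond `t'`
the second summand alone is at least `y`. -/

lemma ConvexOn.sub_mul_le_of_mem_Icc {s : Set ℝ} {f : ℝ → ℝ} (hf : ConvexOn ℝ s f) {a b y : ℝ}
    (ha : a ∈ s) (hb : b ∈ s) (hay : a ≤ y) (hyb : y ≤ b) :
    (b - a) * f y ≤ (b - y) * f a + (y - a) * f b := by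
  rcases (hay.trans hyb).eq_or_lt with rfl | hab
  · obtain rfl : y = a := le_antisymm hyb hay
    simp
  have hba : 0 < b - a := sub_pos.mpr hab
  have hy : (b - y) / (b - a) * a + (y - a) / (b - a) * b = y := by
    field_simp
    ring
  have hchord := hf.2 ha hb (div_nonneg (sub_nonneg.mpr hyb) hba.le)
    (div_nonneg (sub_nonneg.mpr hay) hba.le) (by field_simp; ring)
  simp only [smul_eq_mul, hy] at hchord
  calc (b - a) * f y ≤ (b - a) * ((b - y) / (b - a) * f a + (y - a) / (b - a) * f b) :=
        mul_le_mul_of_nonneg_left hchord hba.le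
    _ = (b - y) * f a + (y - a) * f b := by field_simp

section Tent

variable {f : ℝ → ℝ} (hf : ConvexOn ℝ (Ici 0) f) {t y : ℝ} (ht : 0 < t) (hft : f t < 0)
include hf ht hft

lemma ConvexOn.le_mul_neg_div_of_le (hf0 : f 0 = 0) (hy : 0 ≤ y) (hyt : y ≤ t) :
    y ≤ t * (-f y) / (-f t) := by
  have hchord := hf.sub_mul_le_of_mem_Icc (mem_Ici.mpr le_rfl) (mem_Ici.mpr ht.le) hy hyt
  rw [hf0] at hchord
  rw [le_div_iff₀ (neg_pos.mpr hft)]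
  linarith

lemma ConvexOn.mul_sub_div_le_mul_neg_div {t' : ℝ} (htt' : t < t') (hft' : f t' = 0)
    (hty : t ≤ y) (hyt' : y ≤ t') :
    t * (t' - y) / (t' - t) ≤ t * (-f y) / (-f t) := by
  have hchord := hf.sub_mul_le_of_mem_Icc (mem_Ici.mpr ht.le) (mem_Ici.mpr (ht.trans htt').le)
    hty hyt'
  rw [hft'] at hchord
  rw [div_le_div_iff₀ (sub_pos.mpr htt') (neg_pos.mpr hft)]
  nlinarith

end Tent

theorem stmt10_general (f : ℝ → ℝ) (hf : ConvexOn ℝ (Set.Ici 0) f) (hf0 : f 0 = 0)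
    (t t' : ℝ) (ht : 0 < t) (htt' : t < t')
    (hft : f t < 0) (hft' : f t' = 0) :
    ∀ y : ℝ, 0 ≤ y →
      y ≤ t * max (-f y) 0 / (-f t) + t' * max (y - t) 0 / (t' - t) := by
  intro y hy
  have hd : 0 < t' - t := sub_pos.mpr htt'
  have hfirst : 0 ≤ t * max (-f y) 0 / (-f t) :=
    div_nonneg (mul_nonneg ht.le (le_max_right _ _)) (neg_pos.mpr hft).le
  have hfirst_ge : t * (-f y) / (-f t) ≤ t * max (-f y) 0 / (-f t) := by
    gcongr
    · exact (neg_pos.mpr hft).le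
    · exact le_max_left _ _
  rcases le_or_gt y t with hyt | hty
  · have hsecond : 0 ≤ t' * max (y - t) 0 / (t' - t) :=
      div_nonneg (mul_nonneg (ht.trans htt').le (le_max_right _ _)) hd.le
    linarith [hf.le_mul_neg_div_of_le ht hft hf0 hy hyt]
  rw [max_eq_left (sub_nonneg.mpr hty.le)]
  rcases le_or_gt y t' with hyt' | hty'
  · have hsum : t * (t' - y) / (t' - t) + t' * (y - t) / (t' - t) = y := by
      field_simp
      ring
    linarith [hf.mul_sub_div_le_mul_neg_div ht hft htt' hft' hty.le hyt']
  · have : y ≤ t' * (y - t) / (t' - t) := by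
      rw [le_div_iff₀ hd]
      nlinarith
    linarith

/-- Pointwise bound: if `f` is convex on `[0,∞)` with `f 0 = 0`, `f t < 0`,
`f t' = 0` with `t < t'` and `f ≤ 0` on `[0, t']`, then for all `y ≥ 0`,
`y ≤ t·max(−f(y),0)/(−f(t)) + t'·max(y−t,0)/(t'−t)`. -/
theorem stmt10 (f : ℝ → ℝ) (hf : ConvexOn ℝ (Set.Ici 0) f) (hf0 : f 0 = 0)
    (t t' : ℝ) (ht : 0 < t) (htt' : t < t')
    (hft : f t < 0) (hft' : f t' = 0)
    (hneg : ∀ y, 0 ≤ y → y ≤ t' → f y ≤ 0) :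
    ∀ y : ℝ, 0 ≤ y →
      y ≤ t * max (-f y) 0 / (-f t) + t' * max (y - t) 0 / (t' - t) :=
  stmt10_general f hf hf0 t t' ht htt' hft hft'
end
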